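/- Let 𝒜 and 𝒟 be categories with pullbacks and F : 𝒜 → 𝒟 a fully faithful functor preserving pullbacks. Let f : A → B be a morphism in 𝒜 such that F(f) is an effective descent morphism in 𝒟. Then the following are equivalent: (i) f is an effective descent morphism in 𝒜; (ii) for every morphism g : E → F(B) in 𝒟, if the pullback of g along F(f) is isomorphic to F(C) for some object C of 𝒜, then E is isomorphic to F(D) for some object D of 𝒜. -/

import Mathlib

open CategoryTheory Limits

universe u
universe u₁ v₁ u₂ v₂

attribute [local instance] CategoryTheory.ConcreteCategory.instFunLike

namespace Desc

/-! ### Order-theoretic notions for preorders ("ordered sets") -/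

/-- `x ≅ y`: equivalence in a preorder. -/
def EquivLE {X : Type u} [Preorder X] (x y : X) : Prop := x ≤ y ∧ y ≤ x

/-- `m` is a binary meet (greatest lower bound) of `y` and `z`. -/
def IsMeet {X : Type u} [Preorder X] (y z m : X) : Prop :=
  m ≤ y ∧ m ≤ z ∧ ∀ u, u ≤ y → u ≤ z → u ≤ m

/-- `j` is a join (least upper bound) of the subset `S` computed in the down-set `↓x`. -/
def IsLocalJoin {X : Type u} [Preorder X] (x : X) (S : Set X) (j : X) : Prop :=
  j ≤ x ∧ (∀ s ∈ S, s ≤ j) ∧ ∀ u, u ≤ x → (∀ s ∈ S, s ≤ u) → j ≤ u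

/-- `X` is locally complete: every subset of a down-set `↓x` has a join in `↓x`. -/
def LocallyComplete (X : Type u) [Preorder X] : Prop :=
  ∀ x : X, ∀ S : Set X, (∀ s ∈ S, s ≤ x) → ∃ j, IsLocalJoin x S j

/-- `X` is complete: every subset has a join (least upper bound). -/
def CompleteOrd (X : Type u) [Preorder X] : Prop :=
  ∀ S : Set X, ∃ j, IsLUB S j

/-- `X` locally has binary meets: each down-set `↓x` has binary meets
(these are automatically meets in `X` of the pair). -/
def LocallyBinaryMeets (X : Type u) [Preorder X] : Prop :=
  ∀ x y z : X, y ≤ x → z ≤ x → ∃ m, IsMeet y z m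

/-- `X` is locally cartesian closed: each down-set `↓x` has binary meets and
exponentials `z^y` satisfying `w ∧ y ≤ z ↔ w ≤ z^y`. -/
def LocallyCartesianClosed (X : Type u) [Preorder X] : Prop :=
  LocallyBinaryMeets X ∧
    ∀ x y z : X, y ≤ x → z ≤ x →
      ∃ e, e ≤ x ∧ ∀ w, w ≤ x → ((∃ m, IsMeet w y m ∧ m ≤ z) ↔ w ≤ e)

theorem LocallyComplete.meets {X : Type u} [Preorder X] (h : LocallyComplete X) :
    LocallyBinaryMeets X := by
  intro x y z hy hz
  obtain ⟨j, hj⟩ := h x {u | u ≤ y ∧ u ≤ z} (fun s hs => hs.1.trans hy)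
  exact ⟨j, hj.2.2 y hy (fun s hs => hs.1), hj.2.2 z hz (fun s hs => hs.2),
    fun u h1 h2 => hj.2.1 u ⟨h1, h2⟩⟩

theorem CompleteOrd.meets {X : Type u} [Preorder X] (h : CompleteOrd X) :
    LocallyBinaryMeets X := by
  intro _ y z _ _
  obtain ⟨j, hj⟩ := h {u | u ≤ y ∧ u ≤ z}
  exact ⟨j, hj.2 (fun u hu => hu.1), hj.2 (fun u hu => hu.2),
    fun u h1 h2 => hj.1 ⟨h1, h2⟩⟩

/-! ### Descent-theoretic notions -/

/-- A morphism `f : A ⟶ B` in a category with pullbacks is an *effective descent morphism*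
if the comparison functor from `𝒜/B` to the Eilenberg–Moore category of the monad induced on
`𝒜/A` by the adjunction `f_! ⊣ f*` is an equivalence, i.e. `f*` is monadic. -/
def IsEffectiveDescentMorphism {C : Type*} [Category C] [HasPullbacks C]
    {A B : C} (f : A ⟶ B) : Prop :=
  (Monad.comparison (Over.mapPullbackAdj f)).IsEquivalence

/-- A morphism `f : A ⟶ B` in a category with pullbacks is a *descent morphism*
if the comparison functor from `𝒜/B` to the Eilenberg–Moore category of the monad induced on
`𝒜/A` by the adjunction `f_! ⊣ f*` is fully faithful. -/
def IsDescentMorphism {C : Type*} [Category C] [HasPullbacks C]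
    {A B : C} (f : A ⟶ B) : Prop :=
  (Monad.comparison (Over.mapPullbackAdj f)).Full ∧
    (Monad.comparison (Over.mapPullbackAdj f)).Faithful

/-- A morphism `f : A ⟶ B` is a (pullback-)stable regular epimorphism if every pullback of it
(along any `g : Z ⟶ B`) is a regular epimorphism. -/
def IsStableRegularEpi {C : Type*} [Category C] [HasPullbacks C]
    {A B : C} (f : A ⟶ B) : Prop :=
  ∀ ⦃Z : C⦄ (g : Z ⟶ B), Nonempty (RegularEpi (pullback.snd f g))



section PreordPullbacks

instance : HasPullbacks Preord.{u} := by
  have key : ∀ {A B C : Preord.{u}} (f : A ⟶ C) (g : B ⟶ C), HasLimit (cospan f g) := by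
    intro A B C f g
    let P : Preord.{u} := Preord.of {p : A × B // f p.1 = g p.2}
    let fst : P ⟶ A := Preord.ofHom ⟨fun p => p.1.1, fun _ _ h => h.1⟩
    let snd : P ⟶ B := Preord.ofHom ⟨fun p => p.1.2, fun _ _ h => h.2⟩
    have eq : fst ≫ f = snd ≫ g := Preord.ext (fun p => p.2)
    refine HasLimit.mk ⟨_, PullbackCone.IsLimit.mk eq
      (fun s => Preord.ofHom ⟨fun d => ⟨(s.fst d, s.snd d),
        congrArg (fun (h : s.pt ⟶ C) => h d) s.condition⟩,
        fun _ _ h => ⟨s.fst.hom.monotone h, s.snd.hom.monotone h⟩⟩)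
      (fun s => rfl) (fun s => rfl) (fun s m h1 h2 => ?_)⟩
    apply Preord.ext
    intro d
    apply Subtype.ext
    exact Prod.ext (congrArg (fun (h : s.pt ⟶ A) => h d) h1)
      (congrArg (fun (h : s.pt ⟶ B) => h d) h2)
  exact @hasPullbacks_of_hasLimit_cospan _ _ (fun {A B C f g} => key f g)

instance : HasPullbacks PartOrd.{u} := by
  have key : ∀ {A B C : PartOrd.{u}} (f : A ⟶ C) (g : B ⟶ C), HasLimit (cospan f g) := by
    intro A B C f g
    let P : PartOrd.{u} := PartOrd.of {p : A × B // f p.1 = g p.2}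
    let fst : P ⟶ A := PartOrd.ofHom ⟨fun p => p.1.1, fun _ _ h => h.1⟩
    let snd : P ⟶ B := PartOrd.ofHom ⟨fun p => p.1.2, fun _ _ h => h.2⟩
    have eq : fst ≫ f = snd ≫ g := PartOrd.ext (fun p => p.2)
    refine HasLimit.mk ⟨_, PullbackCone.IsLimit.mk eq
      (fun s => PartOrd.ofHom ⟨fun d => ⟨(s.fst d, s.snd d),
        congrArg (fun (h : s.pt ⟶ C) => h d) s.condition⟩,
        fun _ _ h => ⟨s.fst.hom.monotone h, s.snd.hom.monotone h⟩⟩)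
      (fun s => rfl) (fun s => rfl) (fun s m h1 h2 => ?_)⟩
    apply PartOrd.ext
    intro d
    apply Subtype.ext
    exact Prod.ext (congrArg (fun (h : s.pt ⟶ A) => h d) h1)
      (congrArg (fun (h : s.pt ⟶ B) => h d) h2)
  exact @hasPullbacks_of_hasLimit_cospan _ _ (fun {A B C f g} => key f g)

end PreordPullbacks



variable (X : Type u) [Preorder X]

/-! ### The lax comma category `Ord // X` -/

/-- Objects of the lax comma category `Ord // X`: an ordered set `A` together with a
monotone map `α : A → X`. -/
structure OrdComma : Type (u + 1) where
  carrier : Type u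
  [str : Preorder carrier]
  map : carrier → X
  mono : Monotone map

attribute [instance] OrdComma.str

variable {X}

/-- Morphisms in `Ord // X`: monotone maps `f` with `α(a) ≤ β(f(a))`. -/
@[ext]
structure OrdCommaHom (A B : OrdComma X) : Type u where
  toFun : A.carrier → B.carrier
  mono : Monotone toFun
  le : ∀ a, A.map a ≤ B.map (toFun a)

instance : Category (OrdComma X) where
  Hom := OrdCommaHom
  id A := ⟨id, monotone_id, fun _ => le_refl _⟩
  comp f g := ⟨OrdCommaHom.toFun g ∘ OrdCommaHom.toFun f,
    (OrdCommaHom.mono g).comp (OrdCommaHom.mono f),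
    fun a => (OrdCommaHom.le f a).trans (OrdCommaHom.le g _)⟩
  id_comp _ := rfl
  comp_id _ := rfl
  assoc _ _ _ := rfl

/-- The underlying function of a morphism in `Ord // X`. -/
def OrdComma.app {A B : OrdComma X} (f : A ⟶ B) : A.carrier → B.carrier :=
  OrdCommaHom.toFun f

/-! ### The category `Fam(X)` of set-indexed families of elements of `X` -/

variable (X) in
/-- Objects of `Fam(X)`: families `(α_j)_{j ∈ J}` of elements of `X`. -/
structure FamCat : Type (u + 1) where
  idx : Type u
  val : idx → X

/-- Morphisms in `Fam(X)`: functions `f : J → K` with `α_j ≤ β_{f(j)}`. -/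
@[ext]
structure FamHom (A B : FamCat X) : Type u where
  toFun : A.idx → B.idx
  le : ∀ j, A.val j ≤ B.val (toFun j)

instance : Category (FamCat X) where
  Hom := FamHom
  id A := ⟨id, fun _ => le_refl _⟩
  comp f g := ⟨FamHom.toFun g ∘ FamHom.toFun f,
    fun a => (FamHom.le f a).trans (FamHom.le g _)⟩
  id_comp _ := rfl
  comp_id _ := rfl
  assoc _ _ _ := rfl

/-- The underlying function of a morphism in `Fam(X)`. -/
def FamCat.app {A B : FamCat X} (f : A ⟶ B) : A.idx → B.idx :=
  FamHom.toFun f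

/-! ### The category `Ord ×_Set Fam(X)` -/

variable (X) in
/-- Objects of `Ord ×_Set Fam(X)`: an ordered set `C` with an arbitrary function
`χ : C → X`. -/
structure OrdFam : Type (u + 1) where
  carrier : Type u
  [str : Preorder carrier]
  map : carrier → X

attribute [instance] OrdFam.str

/-- Morphisms in `Ord ×_Set Fam(X)`: monotone maps `f` with `χ(c) ≤ ψ(f(c))`. -/
@[ext]
structure OrdFamHom (A B : OrdFam X) : Type u where
  toFun : A.carrier → B.carrier
  mono : Monotone toFun
  le : ∀ a, A.map a ≤ B.map (toFun a)

instance : Category (OrdFam X) where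
  Hom := OrdFamHom
  id A := ⟨id, monotone_id, fun _ => le_refl _⟩
  comp f g := ⟨OrdFamHom.toFun g ∘ OrdFamHom.toFun f,
    (OrdFamHom.mono g).comp (OrdFamHom.mono f),
    fun a => (OrdFamHom.le f a).trans (OrdFamHom.le g _)⟩
  id_comp _ := rfl
  comp_id _ := rfl
  assoc _ _ _ := rfl

/-! ### Functors between these categories -/

variable (X) in
/-- The forgetful functor `Ord // X ⥤ Ord`. -/
def ordCommaForget : OrdComma X ⥤ Preord.{u} where
  obj A := Preord.of A.carrier
  map f := Preord.ofHom ⟨OrdCommaHom.toFun f, OrdCommaHom.mono f⟩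
  map_id _ := rfl
  map_comp _ _ := rfl

variable (X) in
/-- The forgetful functor `Ord // X ⥤ Fam(X)`, `(A, α) ↦ (α(a))_{a ∈ A}`. -/
def ordCommaToFam : OrdComma X ⥤ FamCat X where
  obj A := ⟨A.carrier, A.map⟩
  map f := ⟨OrdCommaHom.toFun f, OrdCommaHom.le f⟩
  map_id _ := rfl
  map_comp _ _ := rfl

variable (X) in
/-- The projection `ρ₁ : Ord ×_Set Fam(X) ⥤ Ord`. -/
def rho₁ : OrdFam X ⥤ Preord.{u} where
  obj A := Preord.of A.carrier
  map f := Preord.ofHom ⟨OrdFamHom.toFun f, OrdFamHom.mono f⟩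
  map_id _ := rfl
  map_comp _ _ := rfl

variable (X) in
/-- The projection `ρ₂ : Ord ×_Set Fam(X) ⥤ Fam(X)`. -/
def rho₂ : OrdFam X ⥤ FamCat X where
  obj A := ⟨A.carrier, A.map⟩
  map f := ⟨OrdFamHom.toFun f, OrdFamHom.le f⟩
  map_id _ := rfl
  map_comp _ _ := rfl

/-! ### Restrictions `f_x : A_x → B_x` -/

/-- For `(A, α)` in `Ord // X` and `x ∈ X`, the ordered set `A_x = {a ∈ A : x ≤ α(a)}`. -/
def OrdComma.fiber (A : OrdComma X) (x : X) : Preord.{u} :=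
  Preord.of {a : A.carrier // x ≤ A.map a}

/-- The restriction `f_x : A_x → B_x` of a morphism `f : (A, α) ⟶ (B, β)` of `Ord // X`. -/
def OrdComma.fiberMap {A B : OrdComma X} (f : A ⟶ B) (x : X) :
    A.fiber x ⟶ B.fiber x :=
  Preord.ofHom ⟨fun a => ⟨OrdCommaHom.toFun f a.1, a.2.trans (OrdCommaHom.le f a.1)⟩,
    fun _ _ h => OrdCommaHom.mono f h⟩



variable {X : Type u} [Preorder X]

theorem OrdComma.hasPullbacks (hm : LocallyBinaryMeets X) :
    HasPullbacks (OrdComma X) := by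
  have key : ∀ {A B C : OrdComma X} (f : A ⟶ C) (g : B ⟶ C), HasLimit (cospan f g) := by
    intro A B C f g
    have hmeet : ∀ p : {p : A.carrier × B.carrier //
        OrdCommaHom.toFun f p.1 = OrdCommaHom.toFun g p.2},
        ∃ m, IsMeet (A.map p.1.1) (B.map p.1.2) m := fun p =>
      hm (C.map (OrdCommaHom.toFun f p.1.1)) _ _ (OrdCommaHom.le f p.1.1)
        (by rw [p.2]; exact OrdCommaHom.le g p.1.2)
    choose μ hμ using hmeet
    let P : OrdComma X :=
      { carrier := {p : A.carrier × B.carrier //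
          OrdCommaHom.toFun f p.1 = OrdCommaHom.toFun g p.2}
        map := μ
        mono := fun p q h => by
          have hpq : p.1 ≤ q.1 := h
          exact (hμ q).2.2 _ ((hμ p).1.trans (A.mono (Prod.le_def.mp hpq).1))
            ((hμ p).2.1.trans (B.mono (Prod.le_def.mp hpq).2)) }
    let pfst : P ⟶ A := ⟨fun p => p.1.1, fun _ _ h => h.1, fun p => (hμ p).1⟩
    let psnd : P ⟶ B := ⟨fun p => p.1.2, fun _ _ h => h.2, fun p => (hμ p).2.1⟩
    have eq : pfst ≫ f = psnd ≫ g := OrdCommaHom.ext (funext fun p => p.2)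
    refine HasLimit.mk ⟨_, PullbackCone.IsLimit.mk eq
      (fun s => ⟨fun d => ⟨(OrdCommaHom.toFun s.fst d, OrdCommaHom.toFun s.snd d),
          congrFun (congrArg OrdCommaHom.toFun s.condition) d⟩,
        fun _ _ h => ⟨OrdCommaHom.mono s.fst h, OrdCommaHom.mono s.snd h⟩,
        fun d => (hμ _).2.2 _ (OrdCommaHom.le s.fst d) (OrdCommaHom.le s.snd d)⟩)
      (fun s => rfl) (fun s => rfl) (fun s m h1 h2 => ?_)⟩
    apply OrdCommaHom.ext
    funext d
    exact Subtype.ext (Prod.ext (congrFun (congrArg OrdCommaHom.toFun h1) d)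
      (congrFun (congrArg OrdCommaHom.toFun h2) d))
  exact @hasPullbacks_of_hasLimit_cospan _ _ (fun {A B C f g} => key f g)

theorem FamCat.hasPullbacks (hm : LocallyBinaryMeets X) :
    HasPullbacks (FamCat X) := by
  have key : ∀ {A B C : FamCat X} (f : A ⟶ C) (g : B ⟶ C), HasLimit (cospan f g) := by
    intro A B C f g
    have hmeet : ∀ p : {p : A.idx × B.idx // FamHom.toFun f p.1 = FamHom.toFun g p.2},
        ∃ m, IsMeet (A.val p.1.1) (B.val p.1.2) m := fun p =>
      hm (C.val (FamHom.toFun f p.1.1)) _ _ (FamHom.le f p.1.1)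
        (by rw [p.2]; exact FamHom.le g p.1.2)
    choose μ hμ using hmeet
    let P : FamCat X :=
      { idx := {p : A.idx × B.idx // FamHom.toFun f p.1 = FamHom.toFun g p.2}
        val := μ }
    let pfst : P ⟶ A := ⟨fun p => p.1.1, fun p => (hμ p).1⟩
    let psnd : P ⟶ B := ⟨fun p => p.1.2, fun p => (hμ p).2.1⟩
    have eq : pfst ≫ f = psnd ≫ g := FamHom.ext (funext fun p => p.2)
    refine HasLimit.mk ⟨_, PullbackCone.IsLimit.mk eq
      (fun s => ⟨fun d => ⟨(FamHom.toFun s.fst d, FamHom.toFun s.snd d),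
          congrFun (congrArg FamHom.toFun s.condition) d⟩,
        fun d => (hμ _).2.2 _ (FamHom.le s.fst d) (FamHom.le s.snd d)⟩)
      (fun s => rfl) (fun s => rfl) (fun s m h1 h2 => ?_)⟩
    apply FamHom.ext
    funext d
    exact Subtype.ext (Prod.ext (congrFun (congrArg FamHom.toFun h1) d)
      (congrFun (congrArg FamHom.toFun h2) d))
  exact @hasPullbacks_of_hasLimit_cospan _ _ (fun {A B C f g} => key f g)

theorem OrdFam.hasPullbacks (hm : LocallyBinaryMeets X) :
    HasPullbacks (OrdFam X) := by
  have key : ∀ {A B C : OrdFam X} (f : A ⟶ C) (g : B ⟶ C), HasLimit (cospan f g) := by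
    intro A B C f g
    have hmeet : ∀ p : {p : A.carrier × B.carrier //
        OrdFamHom.toFun f p.1 = OrdFamHom.toFun g p.2},
        ∃ m, IsMeet (A.map p.1.1) (B.map p.1.2) m := fun p =>
      hm (C.map (OrdFamHom.toFun f p.1.1)) _ _ (OrdFamHom.le f p.1.1)
        (by rw [p.2]; exact OrdFamHom.le g p.1.2)
    choose μ hμ using hmeet
    let P : OrdFam X :=
      { carrier := {p : A.carrier × B.carrier //
          OrdFamHom.toFun f p.1 = OrdFamHom.toFun g p.2}
        map := μ }
    let pfst : P ⟶ A := ⟨fun p => p.1.1, fun _ _ h => h.1, fun p => (hμ p).1⟩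
    let psnd : P ⟶ B := ⟨fun p => p.1.2, fun _ _ h => h.2, fun p => (hμ p).2.1⟩
    have eq : pfst ≫ f = psnd ≫ g := OrdFamHom.ext (funext fun p => p.2)
    refine HasLimit.mk ⟨_, PullbackCone.IsLimit.mk eq
      (fun s => ⟨fun d => ⟨(OrdFamHom.toFun s.fst d, OrdFamHom.toFun s.snd d),
          congrFun (congrArg OrdFamHom.toFun s.condition) d⟩,
        fun _ _ h => ⟨OrdFamHom.mono s.fst h, OrdFamHom.mono s.snd h⟩,
        fun d => (hμ _).2.2 _ (OrdFamHom.le s.fst d) (OrdFamHom.le s.snd d)⟩)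
      (fun s => rfl) (fun s => rfl) (fun s m h1 h2 => ?_)⟩
    apply OrdFamHom.ext
    funext d
    exact Subtype.ext (Prod.ext (congrFun (congrArg OrdFamHom.toFun h1) d)
      (congrFun (congrArg OrdFamHom.toFun h2) d))
  exact @hasPullbacks_of_hasLimit_cospan _ _ (fun {A B C f g} => key f g)



variable (X : Type u) [Preorder X]

/-- The set of connected components of an ordered set `X`: the quotient of `X` by the
equivalence relation generated by `≤` (zigzags). -/
def ConnComp : Type u := Quot (fun a b : X => a ≤ b)

/-- The connected component of `X` corresponding to `i`, as an ordered set. -/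
def Component (i : ConnComp X) : Type u :=
  {x : X // Quot.mk (fun a b : X => a ≤ b) x = i}

instance (i : ConnComp X) : Preorder (Component X i) :=
  Subtype.preorder _

/-- The comparison functor `Ord // X ⥤ ∏_{i ∈ I} Ord // X_i`, where `(X_i)_{i ∈ I}` are the
connected components of `X`: it sends `(A, α)` to the family of (co)restrictions
`(A_i, α_i : A_i → X_i)` with `A_i = α⁻¹(X_i)`. -/
def componentFunctor : OrdComma X ⥤ (∀ i : ConnComp X, OrdComma (Component X i)) where
  obj A := fun i =>
    { carrier := {a : A.carrier // Quot.mk (fun a b : X => a ≤ b) (A.map a) = i}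
      map := fun a => ⟨A.map a.1, a.2⟩
      mono := fun _ _ h => A.mono h }
  map {A B} f := fun i =>
    { toFun := fun a => ⟨OrdCommaHom.toFun f a.1,
        (Quot.sound (OrdCommaHom.le f a.1)).symm.trans a.2⟩
      mono := fun _ _ h => OrdCommaHom.mono f h
      le := fun a => OrdCommaHom.le f a.1 }
  map_id A := by
    funext i
    apply OrdCommaHom.ext
    funext a
    rfl
  map_comp f g := by
    funext i
    apply OrdCommaHom.ext
    funext a
    rfl

/-!
The functor `F` induces fully faithful functors `Over A ⥤ Over (F A)` and `Over B ⥤ Over (F B)`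
which commute with `f_!` and, since `F` preserves pullbacks, also with `f*` (the mate of the first
square is invertible). They therefore induce a fully faithful functor between the
Eilenberg–Moore categories of `f* f_!` and `(F f)* (F f)_!`, compatible with the two comparison
functors. As the comparison functor of `F f` is an equivalence, the comparison functor of `f` is
fully faithful, and it is essentially surjective exactly when every object over `F B` whose
pullback along `F f` lies in the image of `F` lies itself in that image: an algebra structure on
`F C` always descends to `C` by full faithfulness.
-/

section TransportAlgebra

variable {C : Type*} [Category C] {T : Monad C}

-- An `abbrev`, so that the carrier of the transported algebra is reducibly `Z`.
abbrev transportAlgebra (β : T.Algebra) {Z : C} (j : Z ≅ β.A) : T.Algebra where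
  A := Z
  a := T.map j.hom ≫ β.a ≫ j.inv
  unit := by rw [← T.η.naturality_assoc, β.unit_assoc]; simp
  assoc := by
    rw [← T.μ.naturality_assoc, β.assoc_assoc]
    simp

end TransportAlgebra

noncomputable section Comparison

universe u₃ v₃ u₄ v₄ u₅ v₅ u₆ v₆

variable {C : Type u₃} {D : Type u₄} {C' : Type u₅} {D' : Type u₆}
  [Category.{v₃} C] [Category.{v₄} D] [Category.{v₅} C'] [Category.{v₆} D']
  {L : C ⥤ D} {R : D ⥤ C} (adj : L ⊣ R) {L' : C' ⥤ D'} {R' : D' ⥤ C'} (adj' : L' ⊣ R')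
  {H : C ⥤ C'} {K : D ⥤ D'}

section LiftAlgebra

variable (θ : H ⋙ L' ≅ L ⋙ K)

def squareMate : R ⋙ H ⟶ K ⋙ R' :=
  (mateEquiv adj adj' (TwoSquare.mk _ _ _ _ θ.hom)).natTrans

lemma unit_squareMate (c : C) :
    H.map (adj.unit.app c) ≫ (squareMate adj adj' θ).app (L.obj c) =
      adj'.unit.app (H.obj c) ≫ R'.map (θ.hom.app c) :=
  unit_mateEquiv adj adj' _ c

lemma squareMate_counit (d : D) :
    L'.map ((squareMate adj adj' θ).app d) ≫ adj'.counit.app (K.obj d) =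
      θ.hom.app (R.obj d) ≫ K.map (adj.counit.app d) :=
  mateEquiv_counit adj adj' _ d

variable [IsIso (squareMate adj adj' θ)]

lemma inv_squareMate_naturality {d d' : D} (g : d ⟶ d') :
    inv ((squareMate adj adj' θ).app d) ≫ H.map (R.map g) =
      R'.map (K.map g) ≫ inv ((squareMate adj adj' θ).app d') := by
  rw [IsIso.inv_comp_eq, ← Category.assoc, IsIso.eq_comp_inv]
  exact (squareMate adj adj' θ).naturality g

def monadSquare : H ⋙ (adj'.toMonad : C' ⥤ C') ≅ (adj.toMonad : C ⥤ C) ⋙ H :=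
  NatIso.ofComponents
    (fun c => R'.mapIso (θ.app c) ≪≫ (asIso ((squareMate adj adj' θ).app (L.obj c))).symm)
    (fun {c c'} g => by
      change R'.map (L'.map (H.map g)) ≫ R'.map (θ.hom.app c') ≫
          inv ((squareMate adj adj' θ).app (L.obj c')) =
        (R'.map (θ.hom.app c) ≫ inv ((squareMate adj adj' θ).app (L.obj c))) ≫
          H.map (R.map (L.map g))
      rw [Category.assoc, inv_squareMate_naturality, ← R'.map_comp_assoc, ← R'.map_comp_assoc]
      congr 2
      exact θ.hom.naturality g)

lemma monadSquare_hom_app (c : C) :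
    (monadSquare adj adj' θ).hom.app c =
      R'.map (θ.hom.app c) ≫ inv ((squareMate adj adj' θ).app (L.obj c)) :=
  rfl

lemma monadSquare_naturality {c c' : C} (g : c ⟶ c') :
    (adj'.toMonad : C' ⥤ C').map (H.map g) ≫ (monadSquare adj adj' θ).hom.app c' =
      (monadSquare adj adj' θ).hom.app c ≫ H.map ((adj.toMonad : C ⥤ C).map g) :=
  (monadSquare adj adj' θ).hom.naturality g

lemma map_η_eq_η_comp_monadSquare (c : C) :
    H.map (adj.toMonad.η.app c) =
      adj'.toMonad.η.app (H.obj c) ≫ (monadSquare adj adj' θ).hom.app c := by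
  change H.map (adj.unit.app c) = adj'.unit.app (H.obj c) ≫ _
  rw [monadSquare_hom_app, ← Category.assoc, ← unit_squareMate, Category.assoc,
    IsIso.hom_inv_id, Category.comp_id]

lemma μ_comp_monadSquare (c : C) :
    adj'.toMonad.μ.app (H.obj c) ≫ (monadSquare adj adj' θ).hom.app c =
      (adj'.toMonad : C' ⥤ C').map ((monadSquare adj adj' θ).hom.app c) ≫
        (monadSquare adj adj' θ).hom.app ((adj.toMonad : C ⥤ C).obj c) ≫
          H.map (adj.toMonad.μ.app c) := by
  change R'.map (adj'.counit.app (L'.obj (H.obj c))) ≫ R'.map (θ.hom.app c) ≫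
      inv ((squareMate adj adj' θ).app (L.obj c)) =
    R'.map (L'.map (R'.map (θ.hom.app c) ≫ inv ((squareMate adj adj' θ).app (L.obj c)))) ≫
      (R'.map (θ.hom.app (R.obj (L.obj c))) ≫
        inv ((squareMate adj adj' θ).app (L.obj (R.obj (L.obj c))))) ≫
        H.map (R.map (adj.counit.app (L.obj c)))
  simp only [Category.assoc, inv_squareMate_naturality]
  simp only [← Category.assoc, ← R'.map_comp]
  congr 2
  rw [Category.assoc, ← squareMate_counit adj adj' θ, ← L'.map_comp_assoc, Category.assoc,
    IsIso.inv_hom_id, Category.comp_id]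
  exact (adj'.counit_naturality _).symm

@[simps]
def liftAlgebra : adj.toMonad.Algebra ⥤ adj'.toMonad.Algebra where
  obj α :=
    { A := H.obj α.A
      a := (monadSquare adj adj' θ).hom.app α.A ≫ H.map α.a
      unit := by
        rw [← Category.assoc, ← map_η_eq_η_comp_monadSquare, ← H.map_comp, α.unit]
        exact H.map_id _
      assoc := by
        rw [← Category.assoc, μ_comp_monadSquare, Category.assoc, Category.assoc, ← H.map_comp,
          α.assoc, H.map_comp, Functor.map_comp, Category.assoc,
          reassoc_of% monadSquare_naturality] }
  map {α β} g :=
    { f := H.map g.f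
      h := by
        dsimp only
        rw [reassoc_of% monadSquare_naturality, ← H.map_comp, g.h, H.map_comp,
          Category.assoc] }

instance [H.Faithful] : (liftAlgebra adj adj' θ).Faithful where
  map_injective e := Monad.Algebra.Hom.ext (H.map_injective (congrArg Monad.Algebra.Hom.f e))

instance [H.Full] [H.Faithful] : (liftAlgebra adj adj' θ).Full where
  map_surjective {α β} g := by
    set φ : H.obj α.A ⟶ H.obj β.A := g.f
    have hφ : (adj'.toMonad : C' ⥤ C').map φ ≫ (monadSquare adj adj' θ).hom.app β.A ≫
        H.map β.a = ((monadSquare adj adj' θ).hom.app α.A ≫ H.map α.a) ≫ φ := g.h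
    refine ⟨⟨H.preimage φ, H.map_injective ?_⟩, Monad.Algebra.Hom.ext (H.map_preimage φ)⟩
    rw [H.map_comp, H.map_comp, H.map_preimage,
      ← cancel_epi ((monadSquare adj adj' θ).hom.app α.A),
      ← reassoc_of% monadSquare_naturality, H.map_preimage]
    simpa only [Category.assoc] using hφ

def comparisonLiftAlgebraIso :
    Monad.comparison adj ⋙ liftAlgebra adj adj' θ ≅ K ⋙ Monad.comparison adj' :=
  NatIso.ofComponents
    (fun d : D => Monad.Algebra.isoMk ((asIso (squareMate adj adj' θ)).app d) (by
      change R'.map (L'.map ((squareMate adj adj' θ).app d)) ≫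
          R'.map (adj'.counit.app (K.obj d)) =
        ((R'.map (θ.hom.app (R.obj d)) ≫
          inv ((squareMate adj adj' θ).app (L.obj (R.obj d)))) ≫
            H.map (R.map (adj.counit.app d))) ≫ (squareMate adj adj' θ).app d
      rw [← R'.map_comp, squareMate_counit, Category.assoc, Category.assoc,
        reassoc_of% inv_squareMate_naturality, R'.map_comp]
      simp))
    (fun g => Monad.Algebra.Hom.ext ((squareMate adj adj' θ).naturality g))

variable [H.Full] [H.Faithful]

def preimageAlgebra (β : adj'.toMonad.Algebra) {c : C} (j : H.obj c ≅ β.A) :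
    adj.toMonad.Algebra where
  A := c
  a := H.preimage ((monadSquare adj adj' θ).inv.app c ≫ (transportAlgebra β j).a)
  unit := H.map_injective (by
    rw [H.map_comp, H.map_preimage, map_η_eq_η_comp_monadSquare adj adj' θ, Category.assoc,
      Iso.hom_inv_id_app_assoc, (transportAlgebra β j).unit]
    exact (H.map_id c).symm)
  assoc := H.map_injective (by
    rw [← cancel_epi ((monadSquare adj adj' θ).hom.app ((adj.toMonad : C ⥤ C).obj c)),
      ← cancel_epi ((adj'.toMonad : C' ⥤ C').map ((monadSquare adj adj' θ).hom.app c)),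
      H.map_comp, ← reassoc_of% μ_comp_monadSquare, H.map_comp,
      ← reassoc_of% monadSquare_naturality, ← Functor.map_comp_assoc]
    simp only [H.map_preimage, Iso.hom_inv_id_app_assoc, (transportAlgebra β j).assoc])

lemma liftAlgebra_essImage {β : adj'.toMonad.Algebra} (hβ : H.essImage β.A) :
    (liftAlgebra adj adj' θ).essImage β := by
  obtain ⟨c, ⟨j⟩⟩ := hβ
  refine ⟨preimageAlgebra adj adj' θ β j, ⟨Monad.Algebra.isoMk j ?_⟩⟩
  change (adj'.toMonad : C' ⥤ C').map j.hom ≫ β.a = ((monadSquare adj adj' θ).hom.app c ≫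
    H.map (H.preimage ((monadSquare adj adj' θ).inv.app c ≫ (transportAlgebra β j).a))) ≫ j.hom
  simp

end LiftAlgebra

lemma faithful_comparison (θ : H ⋙ L' ≅ L ⋙ K) [IsIso (squareMate adj adj' θ)]
    [H.Faithful] [K.Faithful] [(Monad.comparison adj').Faithful] :
    (Monad.comparison adj).Faithful :=
  have := Functor.Faithful.of_iso (comparisonLiftAlgebraIso adj adj' θ).symm
  Functor.Faithful.of_comp _ (liftAlgebra adj adj' θ)

lemma full_comparison (θ : H ⋙ L' ≅ L ⋙ K) [IsIso (squareMate adj adj' θ)]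
    [H.Faithful] [K.Full] [(Monad.comparison adj').Full] : (Monad.comparison adj).Full :=
  Functor.Full.of_comp_faithful_iso (comparisonLiftAlgebraIso adj adj' θ)

lemma essSurj_comparison_iff (θ : H ⋙ L' ≅ L ⋙ K) [IsIso (squareMate adj adj' θ)]
    [H.Full] [H.Faithful] [(Monad.comparison adj').IsEquivalence] :
    (Monad.comparison adj).EssSurj ↔ ∀ y : D', H.essImage (R'.obj y) → K.essImage y := by
  constructor
  · intro _ y hy
    obtain ⟨α, ⟨e⟩⟩ := liftAlgebra_essImage adj adj' θ (β := (Monad.comparison adj').obj y) hy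
    refine ⟨(Monad.comparison adj).objPreimage α, ⟨(Monad.comparison adj').preimageIso ?_⟩⟩
    exact (comparisonLiftAlgebraIso adj adj' θ).symm.app _ ≪≫
      (liftAlgebra adj adj' θ).mapIso ((Monad.comparison adj).objObjPreimageIso α) ≪≫ e
  · refine fun h => ⟨fun α => ?_⟩
    let y := (Monad.comparison adj').objPreimage ((liftAlgebra adj adj' θ).obj α)
    let e := (Monad.comparison adj').objObjPreimageIso ((liftAlgebra adj adj' θ).obj α)
    obtain ⟨x, ⟨k⟩⟩ := h y ⟨α.A, ⟨(adj'.toMonad.forget.mapIso e).symm⟩⟩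
    exact ⟨x, ⟨(liftAlgebra adj adj' θ).preimageIso
      ((comparisonLiftAlgebraIso adj adj' θ).app x ≪≫ (Monad.comparison adj').mapIso k ≪≫ e)⟩⟩

theorem isEquivalence_comparison_iff (θ : H ⋙ L' ≅ L ⋙ K) [IsIso (squareMate adj adj' θ)]
    [H.Full] [H.Faithful] [K.Full] [K.Faithful] [(Monad.comparison adj').IsEquivalence] :
    (Monad.comparison adj).IsEquivalence ↔ ∀ y : D', H.essImage (R'.obj y) → K.essImage y := by
  refine ⟨fun h => (essSurj_comparison_iff adj adj' θ).1 h.essSurj, fun h => ?_⟩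
  have := faithful_comparison adj adj' θ
  have := full_comparison adj adj' θ
  have := (essSurj_comparison_iff adj adj' θ).2 h
  exact { }

end Comparison

section Over

variable {𝒜 : Type u₁} [Category.{v₁} 𝒜] {𝒟 : Type u₂} [Category.{v₂} 𝒟] (F : 𝒜 ⥤ 𝒟)

def postMapIso {A B : 𝒜} (f : A ⟶ B) :
    Over.post F ⋙ Over.map (F.map f) ≅ Over.map f ⋙ Over.post F :=
  NatIso.ofComponents (fun a => Over.isoMk (Iso.refl _) (by simp [Over.post]))
    (by intros; ext; simp [Over.post])

lemma squareMate_postMapIso_app_left [HasPullbacks 𝒜] [HasPullbacks 𝒟] {A B : 𝒜} (f : A ⟶ B)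
    (x : Over B) :
    ((squareMate (Over.mapPullbackAdj f) (Over.mapPullbackAdj (F.map f))
      (postMapIso F f)).app x).left = pullbackComparison F x.hom f := by
  apply pullback.hom_ext
  · refine Eq.trans ?_ (pullbackComparison_comp_fst F x.hom f).symm
    have h := congrArg CommaMorphism.left (squareMate_counit (Over.mapPullbackAdj f)
      (Over.mapPullbackAdj (F.map f)) (postMapIso F f) x)
    simp only [postMapIso, Over.comp_left, Over.map_map_left, Over.mapPullbackAdj_counit_app,
      NatIso.ofComponents_hom_app, Over.post_map, Over.homMk_left] at h
    exact h.trans (Category.id_comp _)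
  · refine Eq.trans ?_ (pullbackComparison_comp_snd F x.hom f).symm
    exact Over.w ((squareMate (Over.mapPullbackAdj f) (Over.mapPullbackAdj (F.map f))
      (postMapIso F f)).app x)

instance [HasPullbacks 𝒜] [HasPullbacks 𝒟] [PreservesLimitsOfShape WalkingCospan F]
    {A B : 𝒜} (f : A ⟶ B) :
    IsIso (squareMate (Over.mapPullbackAdj f) (Over.mapPullbackAdj (F.map f))
      (postMapIso F f)) := by
  have (x : Over B) : IsIso ((squareMate (Over.mapPullbackAdj f)
      (Over.mapPullbackAdj (F.map f)) (postMapIso F f)).app x) := by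
    have : IsIso ((Over.forget _).map ((squareMate (Over.mapPullbackAdj f)
        (Over.mapPullbackAdj (F.map f)) (postMapIso F f)).app x)) := by
      rw [Over.forget_map, squareMate_postMapIso_app_left]
      exact (inferInstance : IsIso (pullbackComparison F x.hom f))
    exact isIso_of_reflects_iso _ (Over.forget _)
  exact NatIso.isIso_of_isIso_app _

lemma essImage_overPost_iff [F.Full] [F.Faithful] {X : 𝒜} (y : Over (F.obj X)) :
    (Over.post F).essImage y ↔ F.essImage y.left := by
  refine ⟨fun ⟨c, ⟨e⟩⟩ => ⟨c.left, ⟨(Over.forget _).mapIso e⟩⟩, fun ⟨c, ⟨e⟩⟩ => ?_⟩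
  exact ⟨Over.mk (F.preimage (e.hom ≫ y.hom)), ⟨Over.isoMk e (F.map_preimage _).symm⟩⟩

end Over

/-- **Theorem (descent along fully faithful embeddings).**
Let `𝒜`, `𝒟` be categories with pullbacks and `F : 𝒜 ⥤ 𝒟` fully faithful and preserving
pullbacks. If `F f` is an effective descent morphism in `𝒟`, then `f` is an effective descent
morphism in `𝒜` iff for every `g : E ⟶ F B` whose pullback along `F f` is isomorphic to some
`F C`, also `E` is isomorphic to some `F D`. -/
theorem statement0 {𝒜 : Type u₁} [Category.{v₁} 𝒜] {𝒟 : Type u₂} [Category.{v₂} 𝒟]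
    [HasPullbacks 𝒜] [HasPullbacks 𝒟]
    (F : 𝒜 ⥤ 𝒟) [F.Full] [F.Faithful] [PreservesLimitsOfShape WalkingCospan F]
    {A B : 𝒜} (f : A ⟶ B)
    (hFf : IsEffectiveDescentMorphism (F.map f)) :
    IsEffectiveDescentMorphism f ↔
      ∀ {E : 𝒟} (g : E ⟶ F.obj B),
        (∃ C : 𝒜, Nonempty (pullback (F.map f) g ≅ F.obj C)) →
        ∃ D : 𝒜, Nonempty (E ≅ F.obj D) := by
  have : (Monad.comparison (Over.mapPullbackAdj (F.map f))).IsEquivalence := hFf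
  rw [IsEffectiveDescentMorphism, isEquivalence_comparison_iff (Over.mapPullbackAdj f)
    (Over.mapPullbackAdj (F.map f)) (postMapIso F f)]
  simp only [essImage_overPost_iff]
  constructor
  · rintro h E g ⟨C, ⟨e⟩⟩
    obtain ⟨D, ⟨e'⟩⟩ := h (Over.mk g) ⟨C, ⟨e.symm ≪≫ pullbackSymmetry _ _⟩⟩
    exact ⟨D, ⟨e'.symm⟩⟩
  · rintro h y ⟨C, ⟨e⟩⟩
    obtain ⟨D, ⟨e'⟩⟩ := h y.hom ⟨C, ⟨pullbackSymmetry _ _ ≪≫ e.symm⟩⟩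
    exact ⟨D, ⟨e'.symm⟩⟩

end Desc
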